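/- arXiv:1210.0923 — 2 statements merged into one kernel-verified Lean document; each statement's English description precedes it below -/
import Mathlib

section
/- Let v > k ≥ 1 with 2k > v. Then μ(1,k,v) = ⌈C(v,2)/(v−k)⌉. -/
open Finset

/-- Frequency of a subset `T` in a multiset of blocks `A`: total multiplicity of
blocks containing `T`. -/
def freq (A : Multiset (Finset ℕ)) (T : Finset ℕ) : ℕ :=
  Multiset.card (A.filter (fun K => T ⊆ K))

/-- A `t`-adesign `A(t,k,v)`: a multiset of `k`-subsets of `{0,...,v-1}` in which
all `t`-subsets have pairwise distinct frequencies. -/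
def IsAdesign (t k v : ℕ) (A : Multiset (Finset ℕ)) : Prop :=
  (∀ K ∈ A, K ⊆ Finset.range v ∧ K.card = k) ∧
  ∀ T₁ ∈ (Finset.range v).powersetCard t, ∀ T₂ ∈ (Finset.range v).powersetCard t,
    freq A T₁ = freq A T₂ → T₁ = T₂

/-- `mu t k v`: the smallest possible maximum `t`-subset frequency over all
`t`-adesigns `A(t,k,v)`. -/
noncomputable def mu (t k v : ℕ) : ℕ :=
  sInf {m | ∃ A, IsAdesign t k v A ∧ ∀ T ∈ (Finset.range v).powersetCard t, freq A T ≤ m}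

/-!
Lower bound: in a 1-adesign with `b` blocks whose point frequencies are at most `M ≤ b`, the `v`
distinct frequencies sum to at most `M + (M - 1) + ⋯ + (M - v + 1) = Mv - C(v,2)`, and they sum to
`bk ≥ Mk`; hence `C(v,2) ≤ M(v - k)`.

Upper bound: for `m = ⌈C(v,2)/(v-k)⌉` the frequencies `m, m - 1, …, m - v + 1`, with the last
`r = m(v-k) - C(v,2) < v - k` of them lowered by one, are distinct, at most `m` and sum to `mk`;
the condition `2k > v` makes `m ≥ v`, so none of them is negative. Any such frequency vector is
realised by `m` blocks of size `k`: list each point `i` as many times as its frequency and cut the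
list cyclically into `m` columns.
-/

lemma sum_freq_singleton (S : Finset ℕ) (A : Multiset (Finset ℕ)) (hA : ∀ K ∈ A, K ⊆ S) :
    ∑ x ∈ S, freq A {x} = (A.map Finset.card).sum := by
  induction A using Multiset.induction with
  | empty => simp [freq]
  | cons K A ih =>
    have hfreq : ∀ x, freq (K ::ₘ A) {x} = freq A {x} + if x ∈ K then 1 else 0 := by
      intro x
      by_cases hx : x ∈ K <;> simp [freq, hx, add_comm]
    rw [sum_congr rfl fun x _ => hfreq x, sum_add_distrib,
      ih fun K' hK' => hA K' (Multiset.mem_cons_of_mem hK'), sum_boole, filter_mem_eq_inter,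
      inter_eq_right.2 (hA K (Multiset.mem_cons_self K A))]
    simp [add_comm]

lemma sum_freq_singleton_of_card_eq {A : Multiset (Finset ℕ)} {k v : ℕ}
    (hA : ∀ K ∈ A, K ⊆ range v ∧ #K = k) :
    ∑ x ∈ range v, freq A {x} = Multiset.card A * k := by
  rw [sum_freq_singleton _ _ fun K hK => (hA K hK).1,
    Multiset.map_congr rfl fun K hK => (hA K hK).2]
  simp

lemma freq_le_card (A : Multiset (Finset ℕ)) (T : Finset ℕ) : freq A T ≤ Multiset.card A :=
  Multiset.card_le_card (Multiset.filter_le _ _)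

lemma forall_mem_powersetCard_one_range {v : ℕ} {p : Finset ℕ → Prop} :
    (∀ T ∈ (range v).powersetCard 1, p T) ↔ ∀ x < v, p {x} := by
  simp [powersetCard_one]

lemma isAdesign_one_iff {k v : ℕ} {A : Multiset (Finset ℕ)} :
    IsAdesign 1 k v A ↔
      (∀ K ∈ A, K ⊆ range v ∧ #K = k) ∧ Set.InjOn (fun x => freq A {x}) (range v) := by
  simp only [IsAdesign, forall_mem_powersetCard_one_range, Set.InjOn, coe_range, Set.mem_Iio,
    singleton_inj]

lemma sum_range_id_eq_choose_two (n : ℕ) : ∑ i ∈ range n, i = n.choose 2 := by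
  rw [sum_range_id, Nat.choose_two_right]

lemma choose_two_le_mul_sub_of_isAdesign_one {k v M : ℕ} {A : Multiset (Finset ℕ)}
    (hA : IsAdesign 1 k v A) (hM : ∀ x < v, freq A {x} ≤ M) (hMA : M ≤ Multiset.card A) :
    v.choose 2 ≤ M * (v - k) := by
  rw [isAdesign_one_iff] at hA
  set F : ℕ → ℤ := fun x => freq A {x}
  have hF : Set.InjOn F (range v) := fun x hx y hy h => hA.2 hx hy (by simpa [F] using h)
  have hsum : ∑ y ∈ (range v).image F, y = Multiset.card A * k := by
    rw [sum_image hF]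
    simp only [F]
    exact_mod_cast sum_freq_singleton_of_card_eq hA.1
  have hdistinct := sum_le_sum_range (s := (range v).image F) (c := M) (by simpa [F] using hM)
  rw [hsum, card_image_of_injOn hF, card_range, sum_sub_distrib, sum_const, card_range,
    nsmul_eq_mul, ← Nat.cast_sum, sum_range_id_eq_choose_two] at hdistinct
  have hMk : (M : ℤ) * k ≤ Multiset.card A * k := by gcongr
  rcases le_total k v with hkv | hvk
  · zify [hkv]
    linarith
  · rw [Nat.sub_eq_zero_of_le hvk, mul_zero, ← Nat.cast_le (α := ℤ)]
    nlinarith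

/- Since `f i ≤ m`, the run of point `i` meets each residue class mod `m` at most once: so block `j`
gets one point per position `≡ j [MOD m]`, and point `i` lies in `f i` blocks. -/
namespace CyclicFilling

variable (f : ℕ → ℕ) (v m : ℕ)

def start (i : ℕ) : ℕ := ∑ l ∈ range i, f l

def run (i : ℕ) : Finset ℕ := Ico (start f i) (start f (i + 1))

def owner (p : ℕ) : ℕ := #{i ∈ range v | start f (i + 1) ≤ p}

def block (j : ℕ) : Finset ℕ := {p ∈ range (start f v) | p ≡ j [MOD m]}.image (owner f v)

variable {f v m}

lemma start_succ (i : ℕ) : start f (i + 1) = start f i + f i := sum_range_succ f i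

lemma start_mono : Monotone (start f) := fun _ _ h => sum_le_sum_of_subset (range_subset_range.2 h)

lemma owner_eq_of_mem_run {i p : ℕ} (hi : i < v) (hp : p ∈ run f i) :
    owner f v p = i := by
  rw [run, mem_Ico] at hp
  suffices {l ∈ range v | start f (l + 1) ≤ p} = range i by rw [owner, this, card_range]
  ext l
  simp only [mem_filter, mem_range]
  constructor
  · rintro ⟨-, hl⟩
    by_contra! hil
    exact (hp.2.trans_le (start_mono (by omega))).not_ge hl
  · intro hl
    exact ⟨hl.trans hi, (start_mono hl).trans hp.1⟩

lemma exists_mem_run {p : ℕ} : ∀ {v : ℕ}, p < start f v →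
    ∃ i < v, p ∈ run f i
  | 0, h => by simp [start] at h
  | v + 1, h => by
    by_cases hv : start f v ≤ p
    · exact ⟨v, lt_add_one v, mem_Ico.2 ⟨hv, h⟩⟩
    · obtain ⟨i, hi, hpi⟩ := exists_mem_run (not_le.1 hv)
      exact ⟨i, hi.trans (lt_add_one v), hpi⟩

lemma mem_run_owner {p : ℕ} (hp : p < start f v) :
    owner f v p < v ∧ p ∈ run f (owner f v p) := by
  obtain ⟨i, hi, hpi⟩ := exists_mem_run hp
  rw [owner_eq_of_mem_run hi hpi]
  exact ⟨hi, hpi⟩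

lemma mod_injOn_run (hf : ∀ i < v, f i ≤ m) {i : ℕ} (hi : i < v) :
    Set.InjOn (· % m) (run f i) :=
  (Nat.mod_injOn_Ico _ _).mono <| by
    rw [run]
    gcongr
    rw [start_succ]
    exact Nat.add_le_add_left (hf i hi) _

lemma card_block (hf : ∀ i < v, f i ≤ m) {k j : ℕ} (hsum : start f v = m * k) (hj : j < m) :
    #(block f v m j) = k := by
  have hm : 0 < m := by omega
  rw [block, card_image_of_injOn, ← Nat.count_eq_card_filter_range, hsum, Nat.count_modEq_card _ hm]
  · simp [hm.ne']
  intro p hp q hq hpq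
  simp only [coe_filter, mem_range, Set.mem_ofPred_eq] at hp hq
  obtain ⟨hi, hpi⟩ := mem_run_owner hp.1
  obtain ⟨-, hqi⟩ := mem_run_owner hq.1
  rw [hpq] at hpi
  exact mod_injOn_run hf (hpq ▸ hi) hpi hqi (hp.2.trans hq.2.symm)

lemma filter_mem_block_eq_image_run (hm : 0 < m) {i : ℕ} (hi : i < v) :
    {j ∈ range m | i ∈ block f v m j} = (run f i).image (· % m) := by
  ext j
  rw [mem_filter, mem_image, block]
  simp only [mem_image, mem_filter, mem_range]
  constructor
  · rintro ⟨hj, p, ⟨hp, hpj⟩, rfl⟩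
    exact ⟨p, (mem_run_owner hp).2, by rw [hpj, Nat.mod_eq_of_lt hj]⟩
  · rintro ⟨p, hp, rfl⟩
    have hpv : p < start f v := (mem_Ico.1 hp).2.trans_le (start_mono hi)
    exact ⟨Nat.mod_lt p hm, p, ⟨hpv, (Nat.mod_modEq p m).symm⟩, owner_eq_of_mem_run hi hp⟩

lemma card_filter_mem_block (hf : ∀ i < v, f i ≤ m) {i : ℕ} (hi : i < v) :
    #{j ∈ range m | i ∈ block f v m j} = f i := by
  rcases Nat.eq_zero_or_pos m with rfl | hm
  · simpa using (Nat.le_zero.1 (hf i hi)).symm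
  rw [filter_mem_block_eq_image_run hm hi, card_image_of_injOn (mod_injOn_run hf hi),
    run, Nat.card_Ico, start_succ, Nat.add_sub_cancel_left]

end CyclicFilling

open CyclicFilling in
theorem exists_multiset_freq_singleton_eq {f : ℕ → ℕ} {v m k : ℕ}
    (hf : ∀ i < v, f i ≤ m) (hsum : ∑ i ∈ range v, f i = m * k) :
    ∃ A : Multiset (Finset ℕ), (∀ K ∈ A, K ⊆ range v ∧ #K = k) ∧ ∀ i < v, freq A {i} = f i := by
  refine ⟨(range m).val.map (block f v m), ?_, fun i hi => ?_⟩
  · simp only [Multiset.mem_map, mem_val, mem_range]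
    rintro K ⟨j, hj, rfl⟩
    refine ⟨fun i hi => ?_, card_block hf hsum hj⟩
    obtain ⟨p, hp, rfl⟩ := mem_image.1 hi
    exact mem_range.2 (mem_run_owner (mem_range.1 (mem_filter.1 hp).1)).1
  · rw [← card_filter_mem_block hf hi, freq, Multiset.filter_map]
    simp [Finset.card, Finset.filter_val]

lemma exists_isAdesign_one_freq_le {k v m r : ℕ} (hkv : k ≤ v) (hvm : v ≤ m) (hrv : r ≤ v)
    (hr : v.choose 2 + r = m * (v - k)) :
    ∃ A, IsAdesign 1 k v A ∧ ∀ x < v, freq A {x} ≤ m := by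
  set f : ℕ → ℕ := fun i => m - i - if v - r ≤ i then 1 else 0
  have hfm : ∀ i < v, f i ≤ m := fun i _ => by simp only [f]; split_ifs <;> omega
  have hf_inj : Set.InjOn f (range v) := by
    intro a ha b hb hab
    simp only [coe_range, Set.mem_Iio, f] at ha hb hab
    split_ifs at hab <;> omega
  have hcount : ∑ i ∈ range v, (if v - r ≤ i then 1 else 0) = r := by
    rw [sum_boole, Nat.cast_id, show {i ∈ range v | v - r ≤ i} = Ico (v - r) v by ext; simp; omega,
      Nat.card_Ico]
    omega
  have hsum : ∑ i ∈ range v, f i = m * k := by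
    have hterm : ∀ i ∈ range v, f i + i + (if v - r ≤ i then 1 else 0) = m := fun i hi => by
      simp only [mem_range] at hi; simp only [f]; split_ifs <;> omega
    have htotal := sum_congr rfl hterm
    rw [sum_add_distrib, sum_add_distrib, sum_range_id_eq_choose_two, sum_const,
      card_range, smul_eq_mul] at htotal
    rw [hcount] at htotal
    have : v * m = m * k + m * (v - k) := by rw [mul_comm v, ← mul_add, Nat.add_sub_cancel' hkv]
    omega
  obtain ⟨A, hA, hAf⟩ := exists_multiset_freq_singleton_eq hfm hsum
  refine ⟨A, isAdesign_one_iff.2 ⟨hA, fun x hx y hy hxy => hf_inj hx hy ?_⟩, fun x hx => ?_⟩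
  · simpa [hAf x (by simpa using hx), hAf y (by simpa using hy)] using hxy
  · exact hAf x hx ▸ hfm x hx

theorem stmt5_general (k v : ℕ) (hkv : k < v) (h2k : v < 2 * k) :
    mu 1 k v = v.choose 2 ⌈/⌉ (v - k) := by
  set d := v - k
  set C := v.choose 2
  set m := C ⌈/⌉ d
  have hd : 0 < d := by omega
  have hCm : C ≤ d * m := (ceilDiv_le_iff_le_mul hd).1 le_rfl
  have hmC : d * m < C + d := by
    have : d * m ≤ C + d - 1 := by
      rw [show m = (C + d - 1) / d from Nat.ceilDiv_eq_add_pred_div C d]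
      exact Nat.mul_div_le _ _
    omega
  have hvm : v ≤ m := by
    have hC : C * 2 = v * (v - 1) := by
      rw [show C = v.choose 2 from rfl, ← sum_range_id_eq_choose_two, sum_range_id_mul_two]
    have h2d : 2 * d ≤ v - 1 := by omega
    nlinarith
  refine IsLeast.csInf_eq ⟨?_, ?_⟩
  · obtain ⟨A, hA, hAm⟩ := exists_isAdesign_one_freq_le (r := d * m - C) hkv.le hvm (by omega)
      (by rw [Nat.add_sub_cancel' hCm, mul_comm])
    exact ⟨A, hA, forall_mem_powersetCard_one_range.2 hAm⟩
  · rintro m' ⟨A, hA, hAm'⟩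
    rw [forall_mem_powersetCard_one_range] at hAm'
    have hCd := choose_two_le_mul_sub_of_isAdesign_one hA (M := min m' (Multiset.card A))
      (fun x hx => le_min (hAm' x hx) (freq_le_card _ _)) (min_le_right _ _)
    exact ((ceilDiv_le_iff_le_mul hd).2 (by rwa [mul_comm])).trans (min_le_left _ _)

theorem stmt5 (k v : ℕ) (hk : 1 ≤ k) (hkv : k < v) (h2k : v < 2 * k) :
    mu 1 k v = v.choose 2 ⌈/⌉ (v - k) :=
  stmt5_general k v hkv h2k
end

section
/- Let t ≥ 2, k > 2t + 2. For all sufficiently large v there exists a 2-parameter family: a t-adesign A(t,k,v) whose maximum t-subset frequency is at most 16 t v^{2t+2} log v. Hence μ(t,k,v) ≤ 16 t v^{2t+2} log v for sufficiently large v. -/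
open Finset

/-!
Every `t`-subset `T` of `{0, …, v-1}` lies in two `k`-sets meeting exactly in `T`, so the
`2·C(v,t)` blocks obtained this way separate the `t`-subsets: for `T₁ ≠ T₂` some block contains
`T₁` but not `T₂`. Frequencies are then linear forms in the block multiplicities, and choosing the
multiplicities greedily, each avoiding the at most `C(k,t)·C(v,t)` differences it could cancel,
makes all frequencies distinct with multiplicities `≤ C(k,t)·C(v,t)`. Every frequency is thus at
most `2·C(k,t)·C(v,t)² ≤ v^(2t+2)` once `v ≥ 2·C(k,t)`.
-/

theorem exists_weights_sum_ne_of_separated {α β : Type*} [DecidableEq α] (B : Finset α)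
    (𝒯 : Finset β) (r : β → α → Prop) [∀ T K, Decidable (r T K)] (c : ℕ)
    (hc : ∀ K ∈ B, #{T ∈ 𝒯 | r T K} ≤ c) :
    ∃ μ : α → ℕ, (∀ K, μ K ≤ c * #𝒯) ∧
      ∀ T₁ ∈ 𝒯, ∀ T₂ ∈ 𝒯, (∃ K ∈ B, r T₁ K ∧ ¬ r T₂ K) →
        ∑ K ∈ B with r T₁ K, μ K ≠ ∑ K ∈ B with r T₂ K, μ K := by
  induction B using Finset.induction_on with
  | empty => exact ⟨fun _ => 0, by simp, by simp⟩
  | insert K₀ B hK₀ ih =>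
    obtain ⟨μ, hμ, hsep⟩ := ih fun K hK => hc K (mem_insert_of_mem hK)
    set s : β → ℕ := fun T => ∑ K ∈ B with r T K, μ K
    -- the weight of `K₀` only has to avoid the differences it could cancel
    set bad := ({T ∈ 𝒯 | r T K₀} ×ˢ 𝒯).image fun p => s p.2 - s p.1
    have hbad : #bad < #(range (c * #𝒯 + 1)) := by
      rw [card_range, Nat.lt_succ_iff]
      exact card_image_le.trans <| by
        rw [card_product]; exact Nat.mul_le_mul_right _ (hc K₀ (mem_insert_self _ _))
    obtain ⟨a, ha, ha_bad⟩ := exists_mem_notMem_of_card_lt_card hbad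
    have hsum : ∀ T, ∑ K ∈ insert K₀ B with r T K, Function.update μ K₀ a K
        = s T + if r T K₀ then a else 0 := by
      intro T
      have hB : ∑ K ∈ B with r T K, Function.update μ K₀ a K = s T :=
        sum_congr rfl fun K hK =>
          Function.update_of_ne (by rintro rfl; exact hK₀ (mem_filter.1 hK).1) _ _
      rw [filter_insert]
      split_ifs with h
      · rw [sum_insert fun h' => hK₀ (mem_filter.1 h').1, Function.update_self, hB, add_comm]
      · rw [hB, add_zero]
    refine ⟨Function.update μ K₀ a, fun K => ?_, fun T₁ h₁ T₂ h₂ ⟨K, hK, hr₁, hr₂⟩ => ?_⟩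
    · rcases eq_or_ne K K₀ with rfl | hK
      · simpa [Nat.lt_succ_iff] using ha
      · rw [Function.update_of_ne hK]; exact hμ K
    rw [hsum, hsum]
    have hmem : ∀ {T T'}, T ∈ 𝒯 → r T K₀ → T' ∈ 𝒯 → s T' - s T ∈ bad := fun hT hr hT' =>
      mem_image.2 ⟨(_, _), mem_product.2 ⟨mem_filter.2 ⟨hT, hr⟩, hT'⟩, rfl⟩
    have hsepB : (r T₁ K₀ ↔ r T₂ K₀) → s T₁ ≠ s T₂ := fun hiff => hsep T₁ h₁ T₂ h₂
      ⟨K, (mem_insert.1 hK).resolve_left (by rintro rfl; exact hr₂ (hiff.1 hr₁)), hr₁, hr₂⟩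
    by_cases h₁₀ : r T₁ K₀ <;> by_cases h₂₀ : r T₂ K₀ <;> simp only [h₁₀, h₂₀, if_true, if_false]
    · have := hsepB (iff_of_true h₁₀ h₂₀); omega
    · intro h; exact ha_bad (by convert hmem h₁ h₁₀ h₂; omega)
    · intro h; exact ha_bad (by convert hmem h₂ h₂₀ h₁; omega)
    · have := hsepB (iff_of_false h₁₀ h₂₀); omega

theorem freq_add (A A' : Multiset (Finset ℕ)) (T : Finset ℕ) :
    freq (A + A') T = freq A T + freq A' T := by
  simp only [freq, Multiset.filter_add, Multiset.card_add]

theorem freq_replicate (n : ℕ) (K T : Finset ℕ) :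
    freq (Multiset.replicate n K) T = if T ⊆ K then n else 0 := by
  split_ifs with h
  · rw [freq, Multiset.filter_eq_self.2 fun _ hK => Multiset.eq_of_mem_replicate hK ▸ h,
      Multiset.card_replicate]
  · rw [freq, Multiset.filter_eq_nil.2 fun _ hK => Multiset.eq_of_mem_replicate hK ▸ h,
      Multiset.card_zero]

theorem freq_sum_replicate (B : Finset (Finset ℕ)) (μ : Finset ℕ → ℕ) (T : Finset ℕ) :
    freq (∑ K ∈ B, Multiset.replicate (μ K) K) T = ∑ K ∈ B with T ⊆ K, μ K := by
  let freqT : Multiset (Finset ℕ) →+ ℕ :=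
    { toFun := (freq · T), map_zero' := rfl, map_add' := (freq_add · · T) }
  rw [sum_filter, ← funext fun K => freq_replicate (μ K) K T]
  exact map_sum freqT _ B

theorem exists_supersets_inter_eq {α : Type*} [DecidableEq α] {T U : Finset α} {d : ℕ}
    (hTU : T ⊆ U) (hU : #T + 2 * d ≤ #U) :
    ∃ K₁ K₂, K₁ ∈ U.powersetCard (#T + d) ∧ K₂ ∈ U.powersetCard (#T + d) ∧
      T ⊆ K₁ ∧ T ⊆ K₂ ∧ K₁ ∩ K₂ = T := by
  obtain ⟨P, hPU, hP⟩ := exists_subset_card_eq (s := U \ T) (n := 2 * d)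
    (by rw [card_sdiff_of_subset hTU]; omega)
  obtain ⟨P₁, hP₁P, hP₁⟩ := exists_subset_card_eq (s := P) (n := d) (by omega)
  have hTP : Disjoint T P := disjoint_of_subset_right hPU disjoint_sdiff
  refine ⟨T ∪ P₁, T ∪ (P \ P₁), mem_powersetCard.2 ⟨?_, ?_⟩, mem_powersetCard.2 ⟨?_, ?_⟩,
    subset_union_left, subset_union_left, ?_⟩
  · exact union_subset hTU (hP₁P.trans (hPU.trans sdiff_subset))
  · rw [card_union_of_disjoint (disjoint_of_subset_right hP₁P hTP), hP₁]
  · exact union_subset hTU (sdiff_subset.trans (hPU.trans sdiff_subset))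
  · rw [card_union_of_disjoint (disjoint_of_subset_right sdiff_subset hTP),
      card_sdiff_of_subset hP₁P]
    omega
  · rw [← union_inter_distrib_left, inter_sdiff_self, union_empty]

theorem exists_separating_blocks {α : Type*} [DecidableEq α] (U : Finset α) {t d : ℕ}
    (hU : t + 2 * d ≤ #U) :
    ∃ B : Finset (Finset α), #B ≤ 2 * #(U.powersetCard t) ∧ B ⊆ U.powersetCard (t + d) ∧
      ∀ T₁ ∈ U.powersetCard t, ∀ T₂ ∈ U.powersetCard t, T₁ ≠ T₂ →
        ∃ K ∈ B, T₁ ⊆ K ∧ ¬ T₂ ⊆ K := by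
  have hpair : ∀ T, ∃ K₁ K₂, T ∈ U.powersetCard t → K₁ ∈ U.powersetCard (t + d) ∧
      K₂ ∈ U.powersetCard (t + d) ∧ T ⊆ K₁ ∧ T ⊆ K₂ ∧ K₁ ∩ K₂ = T := by
    intro T
    by_cases hT : T ∈ U.powersetCard t
    · obtain ⟨hTU, rfl⟩ := mem_powersetCard.1 hT
      obtain ⟨K₁, K₂, h⟩ := exists_supersets_inter_eq hTU hU
      exact ⟨K₁, K₂, fun _ => h⟩
    · exact ⟨∅, ∅, fun h => absurd h hT⟩
  choose K₁ K₂ hKspec using hpair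
  refine ⟨(U.powersetCard t).biUnion fun T => {K₁ T, K₂ T}, ?_, ?_, ?_⟩
  · calc _ ≤ ∑ T ∈ U.powersetCard t, #({K₁ T, K₂ T} : Finset (Finset α)) := card_biUnion_le
      _ ≤ ∑ _T ∈ U.powersetCard t, 2 := sum_le_sum fun _ _ => card_le_two
      _ = 2 * #(U.powersetCard t) := by rw [sum_const, smul_eq_mul, mul_comm]
  · intro K hK
    obtain ⟨T, hT, hKT⟩ := mem_biUnion.1 hK
    rcases mem_insert.1 hKT with rfl | hKT
    · exact (hKspec T hT).1
    · exact mem_singleton.1 hKT ▸ (hKspec T hT).2.1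
  · intro T₁ hT₁ T₂ hT₂ hne
    obtain ⟨-, -, h₁, h₂, hinter⟩ := hKspec T₁ hT₁
    have hT₂T₁ : ¬ T₂ ⊆ T₁ := fun h => hne (eq_of_subset_of_card_le h
      (by rw [(mem_powersetCard.1 hT₁).2, (mem_powersetCard.1 hT₂).2])).symm
    by_cases h : T₂ ⊆ K₁ T₁
    · exact ⟨K₂ T₁, mem_biUnion.2 ⟨T₁, hT₁, by simp⟩, h₂,
        fun h' => hT₂T₁ (hinter ▸ subset_inter h h')⟩
    · exact ⟨K₁ T₁, mem_biUnion.2 ⟨T₁, hT₁, by simp⟩, h₁, h⟩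

theorem exists_adesign_freq_le {t k v : ℕ} (htk : t ≤ k) (hv : 2 * k ≤ v + t) :
    ∃ A, IsAdesign t k v A ∧
      ∀ T ∈ (range v).powersetCard t, freq A T ≤ 2 * k.choose t * v.choose t ^ 2 := by
  obtain ⟨B, hB_card, hB_sub, hB_sep⟩ :=
    exists_separating_blocks (range v) (t := t) (d := k - t) (by rw [card_range]; omega)
  rw [Nat.add_sub_cancel' htk] at hB_sub
  obtain ⟨μ, hμ, hμ_sep⟩ := exists_weights_sum_ne_of_separated B ((range v).powersetCard t)
    (· ⊆ ·) (k.choose t) fun K hK => by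
      rw [← (mem_powersetCard.1 (hB_sub hK)).2, ← card_powersetCard]
      exact card_le_card fun T hT => by
        rw [mem_filter, mem_powersetCard] at hT
        rw [mem_powersetCard]
        exact ⟨hT.2, hT.1.2⟩
  have hN : #((range v).powersetCard t) = v.choose t := by rw [card_powersetCard, card_range]
  refine ⟨∑ K ∈ B, Multiset.replicate (μ K) K, ⟨fun K hK => ?_, fun T₁ h₁ T₂ h₂ heq => ?_⟩,
    fun T _ => ?_⟩
  · obtain ⟨K', hK', hK⟩ := Multiset.mem_sum.1 hK
    exact Multiset.eq_of_mem_replicate hK ▸ mem_powersetCard.1 (hB_sub hK')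
  · by_contra hne
    rw [freq_sum_replicate, freq_sum_replicate] at heq
    exact hμ_sep T₁ h₁ T₂ h₂ (hB_sep T₁ h₁ T₂ h₂ hne) heq
  · rw [freq_sum_replicate]
    calc ∑ K ∈ B with T ⊆ K, μ K ≤ #B * (k.choose t * v.choose t) :=
          (sum_le_sum_of_subset (filter_subset _ _)).trans
            (sum_le_card_nsmul _ _ _ fun K _ => hN ▸ hμ K)
      _ ≤ 2 * v.choose t * (k.choose t * v.choose t) := by
          gcongr; exact hN ▸ hB_card
      _ = 2 * k.choose t * v.choose t ^ 2 := by ring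

theorem two_mul_choose_mul_choose_sq_le {t k v : ℕ} (ht : 1 ≤ t) (hv : 2 * k.choose t + 3 ≤ v) :
    ((2 * k.choose t * v.choose t ^ 2 : ℕ) : ℝ) ≤ 16 * t * (v : ℝ) ^ (2 * t + 2) * Real.log v := by
  have hnat : 2 * k.choose t * v.choose t ^ 2 ≤ v ^ (2 * t + 2) :=
    calc 2 * k.choose t * v.choose t ^ 2 ≤ v * v * (v ^ t) ^ 2 := by
          refine Nat.mul_le_mul ?_ (Nat.pow_le_pow_left (Nat.choose_le_pow v t) 2)
          exact (show 2 * k.choose t ≤ v by omega).trans (Nat.le_mul_self v)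
      _ = v ^ (2 * t + 2) := by ring
  have hlog : 1 ≤ Real.log v := by
    have : (3 : ℝ) ≤ v := by exact_mod_cast (show 3 ≤ v by omega)
    rw [Real.le_log_iff_exp_le (by linarith)]
    linarith [Real.exp_one_lt_d9]
  have ht' : (1 : ℝ) ≤ t := by exact_mod_cast ht
  calc ((2 * k.choose t * v.choose t ^ 2 : ℕ) : ℝ) ≤ (v : ℝ) ^ (2 * t + 2) := by
        exact_mod_cast hnat
    _ ≤ (v : ℝ) ^ (2 * t + 2) * (16 * t * Real.log v) :=
        le_mul_of_one_le_right (by positivity) (by nlinarith)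
    _ = 16 * t * (v : ℝ) ^ (2 * t + 2) * Real.log v := by ring

theorem stmt19 (t k : ℕ) (ht : 2 ≤ t) (hk : 2 * t + 2 < k) :
    ∃ v₀ : ℕ, ∀ v ≥ v₀,
      (∃ A : Multiset (Finset ℕ), IsAdesign t k v A ∧
        ∀ T ∈ (Finset.range v).powersetCard t,
          (freq A T : ℝ) ≤ 16 * t * (v : ℝ) ^ (2 * t + 2) * Real.log v) ∧
      (mu t k v : ℝ) ≤ 16 * t * (v : ℝ) ^ (2 * t + 2) * Real.log v := by
  refine ⟨2 * k.choose t + 2 * k + 3, fun v hv => ?_⟩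
  obtain ⟨A, hA, hfreq⟩ := exists_adesign_freq_le (t := t) (k := k) (v := v) (by omega) (by omega)
  have hbound := two_mul_choose_mul_choose_sq_le (t := t) (k := k) (v := v) (by omega) (by omega)
  have hmu : mu t k v ≤ 2 * k.choose t * v.choose t ^ 2 := Nat.sInf_le ⟨A, hA, hfreq⟩
  exact ⟨⟨A, hA, fun T hT => (Nat.cast_le.2 (hfreq T hT)).trans hbound⟩,
    (Nat.cast_le.2 hmu).trans hbound⟩
end
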